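/- Let X be a Banach space, 1 < p < ∞, and let N be the greatest integer strictly less than p. Let φ : X → ℝ be N-times Fréchet differentiable with φ(0) = 0, φ(x) = 2 whenever ‖x‖ ≥ 1, and ‖φ^{(N)}(x) − φ^{(N)}(y)‖ ≤ M ‖x − y‖^{p−N} for all x, y ∈ X, where M > 0. Let {x_n} be a weakly null normalized sequence in X such that P(x_n) → 0 for every continuous homogeneous polynomial P on X of degree at most N. Then there exist a constant C > 0 (depending only on M and p) and a subsequence of {x_n} having an upper p-estimate with constant C. -/

import Mathlib

open Filter Finset

/-- A sequence is normalized if every term has norm one. -/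
def IsNormalizedSeq {X : Type*} [NormedAddCommGroup X] (x : ℕ → X) : Prop :=
  ∀ n, ‖x n‖ = 1

/-- A sequence in a Banach lattice is pairwise disjoint if `|x i| ⊓ |x j| = 0` for `i ≠ j`. -/
def IsDisjointSeq {X : Type*} [NormedAddCommGroup X] [Lattice X] [IsOrderedAddMonoid X] [HasSolidNorm X] (x : ℕ → X) : Prop :=
  ∀ i j, i ≠ j → |x i| ⊓ |x j| = 0

/-- A sequence is weakly null if `f (x n) → 0` for every continuous linear functional `f`. -/
def IsWeaklyNull {X : Type*} [NormedAddCommGroup X] [NormedSpace ℝ X] (x : ℕ → X) : Prop :=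
  ∀ f : X →L[ℝ] ℝ, Tendsto (fun n => f (x n)) atTop (nhds 0)

/-- A sequence has an upper `p`-estimate with constant `C`. -/
def HasUpperEstimate {X : Type*} [NormedAddCommGroup X] [NormedSpace ℝ X]
    (p C : ℝ) (x : ℕ → X) : Prop :=
  ∀ (n : ℕ) (a : ℕ → ℝ),
    ‖∑ k ∈ Finset.range n, a k • x k‖ ≤ C * (∑ k ∈ Finset.range n, |a k| ^ p) ^ (1 / p)

/-- A sequence has a lower `q`-estimate with constant `C`. -/
def HasLowerEstimate {X : Type*} [NormedAddCommGroup X] [NormedSpace ℝ X]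
    (q C : ℝ) (x : ℕ → X) : Prop :=
  ∀ (n : ℕ) (a : ℕ → ℝ),
    C * (∑ k ∈ Finset.range n, |a k| ^ q) ^ (1 / q) ≤ ‖∑ k ∈ Finset.range n, a k • x k‖

/-- A sequence is equivalent to the unit vector basis of `ℓ_r`. -/
def EquivUnitBasisLp {X : Type*} [NormedAddCommGroup X] [NormedSpace ℝ X]
    (r : ℝ) (x : ℕ → X) : Prop :=
  ∃ c C : ℝ, 0 < c ∧ 0 < C ∧ HasLowerEstimate r c x ∧ HasUpperEstimate r C x

/-- `smoothOrder p` is the greatest integer strictly less than `p` (for `p > 1`). -/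
noncomputable def smoothOrder (p : ℝ) : ℕ := ⌈p⌉₊ - 1

/-- `φ : X → ℝ` is `UH^p`-smooth: it is `N`-times Fréchet differentiable, where `N` is the
greatest integer strictly below `p`, and its `N`-th derivative is `(p-N)`-Hölder. -/
def IsUHSmoothFun {X : Type*} [NormedAddCommGroup X] [NormedSpace ℝ X]
    (p : ℝ) (φ : X → ℝ) : Prop :=
  ContDiff ℝ (smoothOrder p) φ ∧
  ∃ M : ℝ, 0 < M ∧ ∀ x y : X,
    ‖iteratedFDeriv ℝ (smoothOrder p) φ x - iteratedFDeriv ℝ (smoothOrder p) φ y‖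
      ≤ M * ‖x - y‖ ^ (p - (smoothOrder p : ℝ))

/-- A Banach space is `UH^p`-smooth if it carries a `UH^p`-smooth bump function. -/
def IsUHSmooth (p : ℝ) (X : Type*) [NormedAddCommGroup X] [NormedSpace ℝ X] : Prop :=
  ∃ φ : X → ℝ, IsUHSmoothFun p φ ∧
    Bornology.IsBounded (Function.support φ) ∧ (Function.support φ).Nonempty

/-- `X` has the `UDS_p`-property: there is a uniform constant `C` such that every normalized
pairwise disjoint sequence has a subsequence with an upper `p`-estimate with constant `C`. -/
def HasUDS (X : Type*) [NormedAddCommGroup X] [Lattice X] [IsOrderedAddMonoid X] [HasSolidNorm X] [NormedSpace ℝ X] (p : ℝ) : Prop :=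
  ∃ C : ℝ, 0 < C ∧ ∀ x : ℕ → X, IsNormalizedSeq x → IsDisjointSeq x →
    ∃ φ : ℕ → ℕ, StrictMono φ ∧ HasUpperEstimate p C (x ∘ φ)

/-! Taylor's formula of order `N` with a `(p - N)`-Hölder top derivative bounds the increment
`φ(y + a x) - φ(y)` by the terms of degree `1, …, N` plus `M |a|^p`. On a compact set of base
points `y` the terms of positive degree are uniformly small along a `𝒫_N`-null sequence, so a
subsequence can be chosen term by term for which they add up to at most `1/2` over any sum with
coefficients in `[-1, 1]`. Hence `φ(∑ a_k x_{ψ k}) ≤ M ∑ |a_k|^p + 1/2 < 2` once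
`∑ |a_k|^p ≤ 1 / (2M)`, and since `φ = 2` off the unit ball such sums have norm `< 1`. -/

open Topology

section Taylor

variable {E F : Type*} [NormedAddCommGroup E] [NormedSpace ℝ E]
  [NormedAddCommGroup F] [NormedSpace ℝ F]

theorem iteratedDeriv_comp_add_smul {n : WithTop ℕ∞} {f : E → F} (hf : ContDiff ℝ n f)
    (y h : E) {j : ℕ} (hj : j ≤ n) (t : ℝ) :
    iteratedDeriv j (fun s : ℝ => f (y + s • h)) t =
      iteratedFDeriv ℝ j f (y + t • h) (fun _ => h) := by
  have hf' : ContDiff ℝ n (fun z => f (y + z)) := hf.comp (contDiff_const.add contDiff_id)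
  have hcomp : (fun s : ℝ => f (y + s • h)) =
      (fun z => f (y + z)) ∘ ContinuousLinearMap.smulRight (1 : ℝ →L[ℝ] ℝ) h := rfl
  rw [iteratedDeriv_eq_iteratedFDeriv, hcomp,
    ContinuousLinearMap.iteratedFDeriv_comp_right _ hf' _ hj, iteratedFDeriv_comp_add_left]
  simp

theorem norm_sub_sum_iteratedDeriv_le {g : ℝ → F} {n : ℕ} (hg : ContDiff ℝ n g) {K : ℝ}
    (hK : ∀ t ∈ Set.Icc (0 : ℝ) 1, ‖iteratedDeriv n g t - iteratedDeriv n g 0‖ ≤ K) {t : ℝ}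
    (ht : t ∈ Set.Icc (0 : ℝ) 1) :
    ‖g t - ∑ j ∈ range (n + 1), (t ^ j / j.factorial) • iteratedDeriv j g 0‖ ≤ K := by
  induction n generalizing g t with
  | zero => simpa using hK t ht
  | succ n ih =>
    have hg' : ContDiff ℝ n (deriv g) := (contDiff_succ_iff_deriv.mp hg).2.2
    have hderiv (s : ℝ) (hs : s ∈ Set.Icc (0 : ℝ) 1) :
        ‖deriv g s - ∑ j ∈ range (n + 1), (s ^ j / j.factorial) • iteratedDeriv (j + 1) g 0‖
          ≤ K := by
      simpa only [iteratedDeriv_succ'] using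
        ih hg' (by simpa only [iteratedDeriv_succ'] using hK) hs
    have hpoly (s : ℝ) : HasDerivAt
        (fun s : ℝ => ∑ j ∈ range (n + 2), (s ^ j / j.factorial) • iteratedDeriv j g 0)
        (∑ j ∈ range (n + 1), (s ^ j / j.factorial) • iteratedDeriv (j + 1) g 0) s := by
      convert HasDerivAt.fun_sum fun j _ =>
        ((hasDerivAt_pow j s).div_const (j.factorial : ℝ)).smul_const (iteratedDeriv j g 0) using 1
      rw [sum_range_succ' _ (n + 1)]
      refine (add_zero _).symm.trans (congrArg₂ _ (sum_congr rfl fun j _ => ?_) (by simp))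
      rw [Nat.factorial_succ, Nat.cast_mul, Nat.add_sub_cancel]
      congr 1
      field_simp
    have := (convex_Icc (0 : ℝ) 1).norm_image_sub_le_of_norm_hasDerivWithin_le
      (fun s _ => (((hg.differentiable (by simp)) s).hasDerivAt.sub (hpoly s)).hasDerivWithinAt)
      hderiv (Set.left_mem_Icc.2 zero_le_one) ht
    calc _ ≤ K * ‖t - 0‖ := by simpa [sum_range_succ' _ (n + 1)] using this
      _ ≤ K := by
        have hK0 : 0 ≤ K := (norm_nonneg _).trans (hK 0 (Set.left_mem_Icc.2 zero_le_one))
        rw [sub_zero, Real.norm_of_nonneg ht.1]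
        exact mul_le_of_le_one_right hK0 ht.2

noncomputable def taylorPolynomial (f : E → F) (N : ℕ) (y h : E) : F :=
  ∑ j ∈ range (N + 1), (j.factorial : ℝ)⁻¹ • iteratedFDeriv ℝ j f y (fun _ => h)

theorem norm_sub_taylorPolynomial_le_of_holder {N : ℕ} {f : E → F} (hf : ContDiff ℝ N f)
    {M q : ℝ} (hM : 0 ≤ M) (hq : 0 ≤ q)
    (hhold : ∀ u v, ‖iteratedFDeriv ℝ N f u - iteratedFDeriv ℝ N f v‖ ≤ M * ‖u - v‖ ^ q)
    (y h : E) :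
    ‖f (y + h) - taylorPolynomial f N y h‖ ≤ M * ‖h‖ ^ q * ‖h‖ ^ N := by
  have hline : ∀ j ≤ N, ∀ t : ℝ, iteratedDeriv j (fun s : ℝ => f (y + s • h)) t =
      iteratedFDeriv ℝ j f (y + t • h) (fun _ => h) := fun j hj =>
    iteratedDeriv_comp_add_smul hf y h (by exact_mod_cast hj)
  have hK (t : ℝ) (ht : t ∈ Set.Icc (0 : ℝ) 1) :
      ‖iteratedDeriv N (fun s : ℝ => f (y + s • h)) t
        - iteratedDeriv N (fun s : ℝ => f (y + s • h)) 0‖ ≤ M * ‖h‖ ^ q * ‖h‖ ^ N := by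
    rw [hline N le_rfl, hline N le_rfl, zero_smul, add_zero, ← sub_apply]
    calc _ ≤ ‖iteratedFDeriv ℝ N f (y + t • h) - iteratedFDeriv ℝ N f y‖ * ‖h‖ ^ N := by
          simpa using
            (iteratedFDeriv ℝ N f (y + t • h) - iteratedFDeriv ℝ N f y).le_opNorm fun _ => h
      _ ≤ M * ‖t • h‖ ^ q * ‖h‖ ^ N := by
          gcongr
          simpa using hhold (y + t • h) y
      _ ≤ M * ‖h‖ ^ q * ‖h‖ ^ N := by
          gcongr
          rw [norm_smul, Real.norm_of_nonneg ht.1]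
          exact mul_le_of_le_one_left (norm_nonneg h) ht.2
  have hg : ContDiff ℝ N (fun s : ℝ => f (y + s • h)) := hf.comp (by fun_prop)
  convert norm_sub_sum_iteratedDeriv_le hg hK (Set.right_mem_Icc.2 zero_le_one) using 3
  · simp
  · refine sum_congr rfl fun j hj => ?_
    rw [hline j (Nat.lt_succ_iff.mp (mem_range.mp hj)), zero_smul, add_zero]
    simp

end Taylor

section Extraction

variable {E F : Type*} [NormedAddCommGroup E] [NormedSpace ℝ E]
  [NormedAddCommGroup F] [NormedSpace ℝ F]

theorem IsCompact.eventually_forall_norm_apply_le {Y : Type*} [TopologicalSpace Y] {K : Set Y}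
    (hK : IsCompact K) {j : ℕ} {Φ : Y → ContinuousMultilinearMap ℝ (fun _ : Fin j => E) F}
    (hΦ : ContinuousOn Φ K) {v : ℕ → E} (hv : ∀ n, ‖v n‖ ≤ 1)
    (hnull : ∀ y ∈ K, Tendsto (fun n => Φ y (fun _ => v n)) atTop (𝓝 0)) {η : ℝ} (hη : 0 < η) :
    ∀ᶠ n in atTop, ∀ y ∈ K, ‖Φ y (fun _ => v n)‖ ≤ η := by
  obtain ⟨t, htK, hcover⟩ := hK.elim_nhdsWithin_subcover
    (fun z => Φ ⁻¹' Metric.ball (Φ z) (η / 2))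
    fun z hz => hΦ z hz (Metric.ball_mem_nhds _ (half_pos hη))
  have hsmall : ∀ᶠ n in atTop, ∀ z ∈ t, ‖Φ z (fun _ => v n)‖ < η / 2 :=
    t.eventually_all.2 fun z hz =>
      (hnull z (htK z hz)).norm.eventually (gt_mem_nhds (by simpa using half_pos hη))
  filter_upwards [hsmall] with n hn y hy
  obtain ⟨z, hz, hyz⟩ := Set.mem_iUnion₂.1 (hcover hy)
  have hdiff : ‖(Φ y - Φ z) (fun _ => v n)‖ ≤ η / 2 :=
    calc _ ≤ ‖Φ y - Φ z‖ * 1 ^ j :=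
          (Φ y - Φ z).le_opNorm_mul_pow_of_le
            ((pi_norm_le_iff_of_nonneg zero_le_one).2 fun _ => hv n)
      _ ≤ η / 2 := by simpa [← dist_eq_norm] using hyz.le
  calc ‖Φ y (fun _ => v n)‖ ≤ ‖(Φ y - Φ z) (fun _ => v n)‖ + ‖Φ z (fun _ => v n)‖ := by
        simpa using norm_le_norm_sub_add (Φ y (fun _ => v n)) (Φ z (fun _ => v n))
    _ ≤ η := by linarith [hn z hz]

theorem eventually_forall_norm_taylorPolynomial_sub_le {N : ℕ} {f : E → F} (hf : ContDiff ℝ N f)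
    {K : Set E} (hK : IsCompact K) {v : ℕ → E} (hv : ∀ n, ‖v n‖ ≤ 1)
    (hnull : ∀ j, 1 ≤ j → j ≤ N → ∀ A : ContinuousMultilinearMap ℝ (fun _ : Fin j => E) F,
      Tendsto (fun n => A fun _ => v n) atTop (𝓝 0)) {ε : ℝ} (hε : 0 < ε) :
    ∀ᶠ n in atTop, ∀ y ∈ K, ∀ a : ℝ, |a| ≤ 1 →
      ‖taylorPolynomial f N y (a • v n) - f y‖ ≤ ε := by
  have hterm : ∀ j ∈ range N, ∀ᶠ n in atTop, ∀ y ∈ K,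
      ‖iteratedFDeriv ℝ (j + 1) f y (fun _ => v n)‖ ≤ ε / N := fun j hj =>
    have hjN : j + 1 ≤ N := mem_range.1 hj
    hK.eventually_forall_norm_apply_le
      (hf.continuous_iteratedFDeriv (by exact_mod_cast hjN)).continuousOn hv
      (fun y _ => hnull (j + 1) j.succ_pos hjN _) (div_pos hε (by norm_cast; omega))
  filter_upwards [(range N).eventually_all.2 hterm] with n hn y hy a ha
  have hexpand : taylorPolynomial f N y (a • v n) - f y = ∑ j ∈ range N,
      ((j + 1).factorial : ℝ)⁻¹ • a ^ (j + 1) • iteratedFDeriv ℝ (j + 1) f y (fun _ => v n) := by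
    simp only [taylorPolynomial, sum_range_succ', Nat.factorial_zero, iteratedFDeriv_zero_apply,
      Nat.cast_one, inv_one, one_smul, add_sub_cancel_right]
    refine sum_congr rfl fun j _ => ?_
    simpa using congrArg _ ((iteratedFDeriv ℝ (j + 1) f y).map_smul_univ (fun _ => a) fun _ => v n)
  calc _ ≤ ∑ j ∈ range N, ε / N := by
        rw [hexpand]
        refine (norm_sum_le _ _).trans (sum_le_sum fun j hj => ?_)
        rw [norm_smul, norm_smul, norm_pow, Real.norm_eq_abs, Real.norm_eq_abs]
        have hfact : |((j + 1).factorial : ℝ)⁻¹| ≤ 1 := by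
          rw [abs_inv, Nat.abs_cast]
          exact inv_le_one_of_one_le₀ (by exact_mod_cast (j + 1).factorial_pos)
        calc _ ≤ 1 * (1 * ‖iteratedFDeriv ℝ (j + 1) f y (fun _ => v n)‖) := by
              gcongr
              exact pow_le_one₀ (abs_nonneg a) ha
          _ ≤ ε / N := by simpa using hn j hj y hy
    _ ≤ ε := by
        rcases N.eq_zero_or_pos with hN | hN
        · simp [hN, hε.le]
        · rw [sum_const, card_range, nsmul_eq_mul, mul_div_cancel₀ _ (by positivity)]

theorem exists_sum_range_eq_sum_comp {ψ : ℕ → ℕ} (hψ : Function.Injective ψ) {k B : ℕ}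
    (hB : ∀ i < k, ψ i < B) (u : ℕ → E) {c : ℕ → ℝ} (hc : ∀ i < k, |c i| ≤ 1) :
    ∃ d : ℕ → ℝ, (∀ j, |d j| ≤ 1) ∧
      ∑ j ∈ range B, d j • u j = ∑ i ∈ range k, c i • u (ψ i) := by
  set c' : ℕ → ℝ := fun i => if i < k then c i else 0
  refine ⟨Function.extend ψ c' 0, fun j => ?_, ?_⟩
  · by_cases hj : ∃ i, ψ i = j
    · obtain ⟨i, rfl⟩ := hj
      rw [hψ.extend_apply]
      by_cases hi : i < k <;> simp [c', hi, hc]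
    · simp [Function.extend_apply' _ _ _ hj]
  · symm
    calc ∑ i ∈ range k, c i • u (ψ i)
        = ∑ i ∈ range k, Function.extend ψ c' 0 (ψ i) • u (ψ i) :=
          sum_congr rfl fun i hi => by simp [hψ.extend_apply, c', mem_range.1 hi]
      _ = ∑ j ∈ (range k).map ⟨ψ, hψ⟩, Function.extend ψ c' 0 j • u j :=
          (sum_map (range k) ⟨ψ, hψ⟩ fun j => Function.extend ψ c' 0 j • u j).symm
      _ = ∑ j ∈ range B, Function.extend ψ c' 0 j • u j := by
          refine sum_subset (fun j hj => ?_) fun j _ hj => ?_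
          · obtain ⟨i, hi, rfl⟩ := mem_map.1 hj
            exact mem_range.2 (hB i (mem_range.1 hi))
          · by_cases hj' : ∃ i, ψ i = j
            · obtain ⟨i, rfl⟩ := hj'
              have hik : ¬i < k := fun hik => hj (mem_map_of_mem _ (mem_range.2 hik))
              simp [hψ.extend_apply, c', hik]
            · simp [Function.extend_apply' _ _ _ hj']

theorem exists_strictMono_forall_norm_taylorPolynomial_sub_le {N : ℕ} {f : E → F}
    (hf : ContDiff ℝ N f) {v : ℕ → E} (hv : ∀ n, ‖v n‖ ≤ 1)
    (hnull : ∀ j, 1 ≤ j → j ≤ N → ∀ A : ContinuousMultilinearMap ℝ (fun _ : Fin j => E) F,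
      Tendsto (fun n => A fun _ => v n) atTop (𝓝 0)) {ε : ℕ → ℝ} (hε : ∀ k, 0 < ε k) :
    ∃ ψ : ℕ → ℕ, StrictMono ψ ∧ ∀ k (c : ℕ → ℝ), (∀ i ≤ k, |c i| ≤ 1) →
      ‖taylorPolynomial f N (∑ i ∈ range k, c i • v (ψ i)) (c k • v (ψ k))
        - f (∑ i ∈ range k, c i • v (ψ i))‖ ≤ ε k := by
  set K : ℕ → Set E := fun B =>
    (fun d : ℕ → ℝ => ∑ j ∈ range B, d j • v j) '' Set.univ.pi fun _ => Set.Icc (-1) 1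
  have hK (B : ℕ) : IsCompact (K B) :=
    (isCompact_univ_pi fun _ => isCompact_Icc).image (by fun_prop)
  have hnext (k B : ℕ) : ∃ m, B ≤ m ∧ ∀ y ∈ K B, ∀ a : ℝ, |a| ≤ 1 →
      ‖taylorPolynomial f N y (a • v m) - f y‖ ≤ ε k :=
    ((eventually_ge_atTop B).and
      (eventually_forall_norm_taylorPolynomial_sub_le hf (hK B) hv hnull (hε k))).exists
  choose next hle hnext using hnext
  -- `b k` exceeds every index chosen before step `k`
  let b : ℕ → ℕ := fun k => Nat.rec 0 (fun k B => next k B + 1) k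
  let ψ : ℕ → ℕ := fun k => next k (b k)
  have hb : Monotone b := monotone_nat_of_le_succ fun k => (hle k (b k)).trans (Nat.le_succ _)
  have hψ : StrictMono ψ := strictMono_nat_of_lt_succ fun k => hle (k + 1) (b (k + 1))
  refine ⟨ψ, hψ, fun k c hc => hnext k (b k) _ ?_ (c k) (hc k le_rfl)⟩
  obtain ⟨d, hd, hsum⟩ := exists_sum_range_eq_sum_comp hψ.injective
    (fun i hi => (Nat.lt_succ_self (ψ i)).trans_le (hb hi)) v fun i hi => hc i hi.le
  exact ⟨d, fun j _ => abs_le.1 (hd j), hsum⟩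

end Extraction

section UpperEstimate

variable {E : Type*} [NormedAddCommGroup E] [NormedSpace ℝ E]

theorem apply_sum_smul_le {φ : E → ℝ} {N : ℕ} {M p : ℝ} {w : ℕ → E} {ε : ℕ → ℝ}
    (hrem : ∀ y h, ‖φ (y + h) - taylorPolynomial φ N y h‖ ≤ M * ‖h‖ ^ p)
    (hw : ∀ k, ‖w k‖ = 1)
    (hsmall : ∀ k (c : ℕ → ℝ), (∀ i ≤ k, |c i| ≤ 1) →
      ‖taylorPolynomial φ N (∑ i ∈ range k, c i • w i) (c k • w k)
        - φ (∑ i ∈ range k, c i • w i)‖ ≤ ε k)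
    {a : ℕ → ℝ} {n : ℕ} (ha : ∀ k < n, |a k| ≤ 1) :
    φ (∑ k ∈ range n, a k • w k)
      ≤ φ 0 + M * ∑ k ∈ range n, |a k| ^ p + ∑ k ∈ range n, ε k := by
  induction n with
  | zero => simp
  | succ n ih =>
    have hstep := (Real.le_norm_self _).trans (hrem (∑ k ∈ range n, a k • w k) (a n • w n))
    have hterms := (Real.le_norm_self _).trans
      (hsmall n a fun i hi => ha i (Nat.lt_succ_of_le hi))
    rw [norm_smul, hw, mul_one, Real.norm_eq_abs] at hstep
    simp only [sum_range_succ, mul_add]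
    linarith [ih fun k hk => ha k (hk.trans n.lt_succ_self)]

theorem hasUpperEstimate_of_sum_rpow_le_one {p C : ℝ} (hp : 0 < p) {w : ℕ → E}
    (h : ∀ n (a : ℕ → ℝ), ∑ k ∈ range n, |a k| ^ p ≤ 1 → ‖∑ k ∈ range n, a k • w k‖ ≤ C) :
    HasUpperEstimate p C w := by
  intro n a
  set S := ∑ k ∈ range n, |a k| ^ p
  have hS : 0 ≤ S := sum_nonneg fun k _ => by positivity
  rcases hS.eq_or_lt with hS0 | hS0
  · have ha : ∀ k ∈ range n, a k = 0 := fun k hk => by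
      have := (sum_eq_zero_iff_of_nonneg fun k _ => by positivity).1 hS0.symm k hk
      simpa [Real.rpow_eq_zero (abs_nonneg _) hp.ne'] using this
    rw [sum_eq_zero fun k hk => by rw [ha k hk, zero_smul], ← hS0,
      Real.zero_rpow (by positivity)]
    simp
  · set T := S ^ (1 / p)
    have hT : 0 < T := by positivity
    have hb : ∑ k ∈ range n, |T⁻¹ * a k| ^ p = 1 := by
      simp_rw [abs_mul, abs_inv, abs_of_pos hT, Real.mul_rpow (inv_nonneg.2 hT.le) (abs_nonneg _),
        ← mul_sum, Real.inv_rpow hT.le, T, one_div, Real.rpow_inv_rpow hS hp.ne']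
      exact inv_mul_cancel₀ hS0.ne'
    have := h n (fun k => T⁻¹ * a k) hb.le
    simp_rw [mul_smul, ← smul_sum, norm_smul, norm_inv, Real.norm_of_nonneg hT.le] at this
    rw [mul_comm]
    exact (inv_mul_le_iff₀ hT).1 this

theorem hasUpperEstimate_of_apply_sum_le {φ : E → ℝ} {M p : ℝ} (hp : 0 < p) (hM : 0 < M)
    (h2 : ∀ x, 1 ≤ ‖x‖ → φ x = 2) {w : ℕ → E}
    (hφ : ∀ n (a : ℕ → ℝ), (∀ k < n, |a k| ≤ 1) →
      φ (∑ k ∈ range n, a k • w k) ≤ M * ∑ k ∈ range n, |a k| ^ p + 1 / 2) :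
    HasUpperEstimate p (max 1 ((2 * M) ^ (1 / p))) w := by
  refine hasUpperEstimate_of_sum_rpow_le_one hp fun n a ha => ?_
  set C := max 1 ((2 * M) ^ (1 / p))
  have hC : 0 < C := by positivity
  have hCp : 2 * M ≤ C ^ p := by
    calc 2 * M = ((2 * M) ^ (1 / p)) ^ p := by
          rw [one_div, Real.rpow_inv_rpow (by positivity) hp.ne']
      _ ≤ C ^ p := by gcongr; exact le_max_right _ _
  have hb : ∀ k < n, |C⁻¹ * a k| ≤ 1 := fun k hk => by
    have hak : |a k| ^ p ≤ 1 :=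
      (single_le_sum (fun i _ => by positivity) (mem_range.2 hk)).trans ha
    rw [abs_mul, abs_inv, abs_of_pos hC]
    refine mul_le_one₀ (inv_le_one_of_one_le₀ (le_max_left _ _)) (abs_nonneg _) ?_
    by_contra! h
    exact (Real.one_lt_rpow h hp).not_ge hak
  have hbp : M * ∑ k ∈ range n, |C⁻¹ * a k| ^ p ≤ 1 / 2 := by
    simp_rw [abs_mul, abs_inv, abs_of_pos hC, Real.mul_rpow (inv_nonneg.2 hC.le) (abs_nonneg _),
      ← mul_sum, Real.inv_rpow hC.le]
    calc M * ((C ^ p)⁻¹ * ∑ k ∈ range n, |a k| ^ p) ≤ M * (2 * M)⁻¹ := by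
          gcongr
          exact mul_le_of_le_one_right (by positivity) ha |>.trans (inv_anti₀ (by positivity) hCp)
      _ = 1 / 2 := by field_simp
  have hlt : ‖∑ k ∈ range n, (C⁻¹ * a k) • w k‖ < 1 := by
    by_contra! hge
    linarith [h2 _ hge, hφ n _ hb]
  simp_rw [mul_smul, ← smul_sum, norm_smul, norm_inv, Real.norm_of_nonneg hC.le] at hlt
  simpa using ((inv_mul_lt_iff₀ hC).1 hlt).le

end UpperEstimate

theorem smoothOrder_lt {p : ℝ} (hp : 0 < p) : (smoothOrder p : ℝ) < p := by
  have hceil : 1 ≤ ⌈p⌉₊ := Nat.one_le_iff_ne_zero.2 (Nat.ceil_pos.2 hp).ne'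
  rw [smoothOrder, Nat.cast_sub hceil, Nat.cast_one]
  linarith [Nat.ceil_lt_add_one hp.le]

theorem statement12_general {X : Type*} [NormedAddCommGroup X] [NormedSpace ℝ X]
    (p : ℝ) (hp : 1 < p) (M : ℝ) (hM : 0 < M) (φ : X → ℝ)
    (hdiff : ContDiff ℝ (smoothOrder p) φ)
    (h0 : φ 0 = 0) (h2 : ∀ x : X, 1 ≤ ‖x‖ → φ x = 2)
    (hhold : ∀ x y : X,
      ‖iteratedFDeriv ℝ (smoothOrder p) φ x - iteratedFDeriv ℝ (smoothOrder p) φ y‖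
        ≤ M * ‖x - y‖ ^ (p - (smoothOrder p : ℝ)))
    (x : ℕ → X) (hn : IsNormalizedSeq x)
    (hPnull : ∀ m : ℕ, 1 ≤ m → m ≤ smoothOrder p →
      ∀ A : ContinuousMultilinearMap ℝ (fun _ : Fin m => X) ℝ,
        Tendsto (fun n => A (fun _ => x n)) atTop (nhds 0)) :
    ∃ C : ℝ, 0 < C ∧ ∃ ψ : ℕ → ℕ, StrictMono ψ ∧ HasUpperEstimate p C (x ∘ ψ) := by
  have hp0 : 0 < p := by linarith
  have hNp := smoothOrder_lt hp0
  have hrem (y h : X) : ‖φ (y + h) - taylorPolynomial φ (smoothOrder p) y h‖ ≤ M * ‖h‖ ^ p := by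
    calc _ ≤ M * ‖h‖ ^ (p - smoothOrder p) * ‖h‖ ^ smoothOrder p :=
          norm_sub_taylorPolynomial_le_of_holder hdiff hM.le (by linarith) hhold y h
      _ = M * ‖h‖ ^ p := by
          rw [mul_assoc, ← Real.rpow_add_natCast' (norm_nonneg h) (by linarith), sub_add_cancel]
  obtain ⟨ψ, hψ, hsmall⟩ := exists_strictMono_forall_norm_taylorPolynomial_sub_le hdiff
    (fun n => (hn n).le) hPnull (ε := fun k => (1 / 2) ^ k / 4) fun k => by positivity
  refine ⟨_, by positivity, ψ, hψ, hasUpperEstimate_of_apply_sum_le hp0 hM h2 fun n a ha => ?_⟩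
  have hε : ∑ k ∈ range n, (1 / 2 : ℝ) ^ k / 4 ≤ 1 / 2 := by
    rw [← sum_div]
    linarith [sum_geometric_two_le n]
  linarith [apply_sum_smul_le (w := x ∘ ψ) hrem (fun k => hn (ψ k)) hsmall ha]

/-- Second case of the proof of Theorem 2: if `φ` is `UH^p`-smooth with `φ(0)=0`, `φ = 2`
outside the unit ball, and `{x_n}` is a weakly null normalized sequence which is
`𝒫_N`-null (all continuous homogeneous polynomials of degree between `1` and `N` vanish in the
limit), then some subsequence of `{x_n}` has an upper `p`-estimate with a constant depending
only on `M` and `p`. -/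
theorem statement12 {X : Type*} [NormedAddCommGroup X] [NormedSpace ℝ X] [CompleteSpace X]
    (p : ℝ) (hp : 1 < p) (M : ℝ) (hM : 0 < M) (φ : X → ℝ)
    (hdiff : ContDiff ℝ (smoothOrder p) φ)
    (h0 : φ 0 = 0) (h2 : ∀ x : X, 1 ≤ ‖x‖ → φ x = 2)
    (hhold : ∀ x y : X,
      ‖iteratedFDeriv ℝ (smoothOrder p) φ x - iteratedFDeriv ℝ (smoothOrder p) φ y‖
        ≤ M * ‖x - y‖ ^ (p - (smoothOrder p : ℝ)))
    (x : ℕ → X) (hwn : IsWeaklyNull x) (hn : IsNormalizedSeq x)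
    (hPnull : ∀ m : ℕ, 1 ≤ m → m ≤ smoothOrder p →
      ∀ A : ContinuousMultilinearMap ℝ (fun _ : Fin m => X) ℝ,
        Tendsto (fun n => A (fun _ => x n)) atTop (nhds 0)) :
    ∃ C : ℝ, 0 < C ∧ ∃ ψ : ℕ → ℕ, StrictMono ψ ∧ HasUpperEstimate p C (x ∘ ψ) :=
  statement12_general p hp M hM φ hdiff h0 h2 hhold x hn hPnull
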